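/- arXiv:1710.07127 — 3 statements merged into one kernel-verified Lean document; each statement's English description precedes it below -/
import Mathlib

section
/- For every nonnegative integer n and every complex number z, ∑_{k=0}^{n} 2^{2k} · C(2n+1,2k) · B_{2k}(z) = ∑_{k=0}^{n} (2k+1) · 2^{2k} · C(2n+1,2k+1) · E_{2k}(z), where C(n,k) denotes the binomial coefficient. -/
open Finset

/-- The Bernoulli polynomial `B_n` evaluated at a complex number `z`,
with generating function `t·e^{zt}/(e^t−1) = ∑_{n≥0} B_n(z)·t^n/n!`. -/
noncomputable def bernoulliPoly (n : ℕ) (z : ℂ) : ℂ :=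
  Polynomial.aeval z (Polynomial.bernoulli n)

/-- The Euler polynomial `E_n` evaluated at a complex number `z`,
with generating function `2·e^{zt}/(e^t+1) = ∑_{n≥0} E_n(z)·t^n/n!`,
given by the explicit formula `E_n(z) = ∑_{k=0}^n 2^{-k} ∑_{j=0}^k (-1)^j C(k,j)(z+j)^n`. -/
noncomputable def eulerPoly (n : ℕ) (z : ℂ) : ℂ :=
  ∑ k ∈ range (n + 1), (1 / 2 ^ k : ℂ) *
    ∑ j ∈ range (k + 1), (-1) ^ j * (k.choose j : ℂ) * (z + j) ^ n

/-!
Both sides equal `(2n+1)(2z-1)^(2n)`. Bernoulli and Euler polynomials are Appell sequences,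
`P_N(x+y) = ∑ C(N,m) P_m(x) y^(N-m)`, and for any Appell sequence the even part
`∑_{k even} C(N,k) 2^k P_k(z)` equals `2^(N-1) (P_N(z+1/2) + (-1)^N P_N(z-1/2))`.
For `N = 2n+1` the difference equation `B_N(x+1) - B_N(x) = N x^(N-1)` evaluates the left side;
for `N = 2n` the reflection `E_N(x) + E_N(x+1) = 2x^N`, together with
`(2k+1) C(2n+1,2k+1) = (2n+1) C(2n,2k)`, evaluates the right side.
Both properties of `E_N` come from writing it as `∑_k (-1/2)^k Δ^k x^N`,
i.e. `2(2 + Δ)⁻¹ x^N`.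
-/

open Function
open scoped fwdDiff

section Appell

variable {R : Type*} [CommRing R]

def IsAppell (P : ℕ → R → R) : Prop :=
  ∀ N x y, P N (x + y) = ∑ m ∈ range (N + 1), (N.choose m : R) * P m x * y ^ (N - m)

theorem isAppell_sum_choose_mul_pow (a : ℕ → R) :
    IsAppell fun N x ↦ ∑ i ∈ range (N + 1), (N.choose i : R) * a i * x ^ (N - i) := by
  intro N x y
  simp only [mul_sum, sum_mul]
  rw [sum_comm' (t' := range (N + 1)) (s' := fun i ↦ Ico i (N + 1))
    (by intro m i; simp only [mem_range, mem_Ico]; omega)]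
  refine sum_congr rfl fun i hi ↦ ?_
  have hiN : i ≤ N := Nat.lt_succ_iff.mp (mem_range.mp hi)
  rw [add_pow, mul_sum, sum_Ico_eq_sum_range,
    show N + 1 - i = N - i + 1 by omega]
  refine sum_congr rfl fun j hj ↦ ?_
  have hjN : j ≤ N - i := Nat.lt_succ_iff.mp (mem_range.mp hj)
  have hchoose : (N.choose (i + j) : R) * ((i + j).choose i : R)
      = (N.choose i : R) * ((N - i).choose j : R) := by
    have := Nat.choose_mul (n := N) (Nat.le_add_right i j)
    rw [Nat.add_sub_cancel_left] at this
    exact_mod_cast congrArg (Nat.cast : ℕ → R) this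
  rw [show i + j - i = j by omega, show N - (i + j) = N - i - j by omega]
  linear_combination (-(a i * x ^ j * y ^ (N - i - j))) * hchoose

theorem IsAppell.sum {ι : Type*} (s : Finset ι) (c : ι → R) {P : ι → ℕ → R → R}
    (hP : ∀ i, IsAppell (P i)) : IsAppell fun N x ↦ ∑ i ∈ s, c i * P i N x := by
  intro N x y
  simp only [hP _ N x y, mul_sum, sum_mul]
  rw [sum_comm]
  exact sum_congr rfl fun _ _ ↦ sum_congr rfl fun _ _ ↦ by ring

theorem IsAppell.of_forall_le_eq {P : ℕ → R → R} {Q : ℕ → ℕ → R → R}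
    (hQ : ∀ M, IsAppell (Q M)) (hPQ : ∀ M N, N ≤ M → P N = Q M N) : IsAppell P := by
  intro N x y
  rw [hPQ N N le_rfl, hQ N N x y]
  refine sum_congr rfl fun m hm ↦ ?_
  rw [hPQ N m (Nat.lt_succ_iff.mp (mem_range.mp hm))]

theorem isAppell_fwdDiff_iter_pow (h : R) (k : ℕ) :
    IsAppell fun N ↦ (Δ_[h])^[k] (fun t : R ↦ t ^ N) := by
  intro N x y
  have hshift : (fun t : R ↦ (t + y) ^ N)
      = ∑ m ∈ range (N + 1), ((N.choose m : R) * y ^ (N - m)) • fun t : R ↦ t ^ m := by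
    ext t
    simp only [add_pow, Finset.sum_apply, Pi.smul_apply, smul_eq_mul]
    exact sum_congr rfl fun _ _ ↦ by ring
  dsimp only
  rw [← fwdDiff_iter_comp_add, hshift, fwdDiff_iter_finsetSum, Finset.sum_apply]
  refine sum_congr rfl fun m _ ↦ ?_
  rw [fwdDiff_iter_const_smul, Pi.smul_apply, smul_eq_mul]
  ring

theorem IsAppell.pow_mul_add_add_neg_one_pow_mul_sub {P : ℕ → R → R} (hP : IsAppell P)
    {c y : R} (hcy : c * y = 1) (N : ℕ) (x : R) :
    c ^ N * (P N (x + y) + (-1) ^ N * P N (x - y))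
      = ∑ k ∈ range (N + 1), c ^ k * (N.choose k : R) * P k x * (1 + (-1) ^ k) := by
  rw [sub_eq_add_neg, hP, hP, mul_sum, ← sum_add_distrib, mul_sum]
  refine sum_congr rfl fun k hk ↦ ?_
  obtain ⟨j, rfl⟩ := Nat.exists_eq_add_of_le (Nat.lt_succ_iff.mp (mem_range.mp hk))
  have hcyj : c ^ j * y ^ j = 1 := by rw [← mul_pow, hcy, one_pow]
  have hsq : ((-1 : R) ^ j) ^ 2 = 1 := by rw [← pow_mul, pow_mul', neg_one_sq, one_pow]
  rw [Nat.add_sub_cancel_left, neg_pow]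
  linear_combination c ^ k * ((k + j).choose k : R) * P k x *
    ((1 + (-1) ^ k * ((-1) ^ j) ^ 2) * hcyj + (-1) ^ k * hsq)

end Appell

theorem sum_range_mul_one_add_neg_one_pow {R : Type*} [CommRing R] (f : ℕ → R) (n : ℕ) :
    ∑ k ∈ range (2 * n + 1), f k * (1 + (-1) ^ k) = 2 * ∑ j ∈ range (n + 1), f (2 * j) := by
  induction n with
  | zero =>
    simp only [mul_zero, zero_add, range_one, sum_singleton, pow_zero]
    ring
  | succ n ih =>
    rw [show 2 * (n + 1) + 1 = 2 * n + 1 + 1 + 1 by ring, sum_range_succ, sum_range_succ, ih,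
      sum_range_succ _ (n + 1), Odd.neg_one_pow ⟨n, rfl⟩, Even.neg_one_pow ⟨n + 1, by ring⟩]
    ring_nf

theorem isAppell_bernoulliPoly : IsAppell bernoulliPoly := by
  have h : bernoulliPoly = fun N x ↦
      ∑ i ∈ range (N + 1), (N.choose i : ℂ) * (_root_.bernoulli i : ℂ) * x ^ (N - i) := by
    ext N x
    rw [bernoulliPoly, Polynomial.bernoulli, map_sum]
    refine sum_congr rfl fun i _ ↦ ?_
    rw [Polynomial.aeval_monomial, map_mul, eq_ratCast, map_natCast]
    ring
  rw [h]
  exact isAppell_sum_choose_mul_pow _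

theorem bernoulliPoly_add_one (N : ℕ) (x : ℂ) :
    bernoulliPoly N (x + 1) = bernoulliPoly N x + N * x ^ (N - 1) := by
  simpa [bernoulliPoly, Polynomial.aeval_comp, add_comm] using
    congr(Polynomial.aeval x $(Polynomial.bernoulli_comp_one_add_X N))

theorem sum_two_pow_mul_choose_mul_bernoulliPoly (n : ℕ) (z : ℂ) :
    ∑ k ∈ range (n + 1), (2 : ℂ) ^ (2 * k) * ((2 * n + 1).choose (2 * k) : ℂ) *
        bernoulliPoly (2 * k) z = (2 * n + 1) * (2 * z - 1) ^ (2 * n) := by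
  have h := isAppell_bernoulliPoly.pow_mul_add_add_neg_one_pow_mul_sub (c := 2) (y := 1 / 2)
    (by norm_num) (2 * n + 1) z
  rw [sum_range_succ, Odd.neg_one_pow ⟨n, rfl⟩, add_neg_cancel, mul_zero, add_zero,
    sum_range_mul_one_add_neg_one_pow, show z + 1 / 2 = z - 1 / 2 + 1 by ring,
    bernoulliPoly_add_one, Nat.add_sub_cancel] at h
  have hpow : (2 * z - 1) ^ (2 * n) = 2 ^ (2 * n) * (z - 1 / 2) ^ (2 * n) := by
    rw [← mul_pow]; ring
  push_cast at h
  linear_combination (-1 / 2 : ℂ) * h - (2 * n + 1 : ℂ) * hpow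

theorem eulerPoly_eq_sum_fwdDiff_iter {N M : ℕ} (hNM : N ≤ M) (x : ℂ) :
    eulerPoly N x =
      ∑ k ∈ range (M + 1), (-1 / 2 : ℂ) ^ k * (Δ_[1])^[k] (fun t : ℂ ↦ t ^ N) x := by
  have hterm : ∀ k, (1 / 2 ^ k : ℂ) *
      ∑ j ∈ range (k + 1), (-1) ^ j * (k.choose j : ℂ) * (x + j) ^ N
        = (-1 / 2 : ℂ) ^ k * (Δ_[1])^[k] (fun t : ℂ ↦ t ^ N) x := by
    intro k
    rw [fwdDiff_iter_eq_sum_shift, mul_sum, mul_sum]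
    refine sum_congr rfl fun j hj ↦ ?_
    obtain ⟨i, rfl⟩ := Nat.exists_eq_add_of_le (Nat.lt_succ_iff.mp (mem_range.mp hj))
    have hsq : ((-1 : ℂ) ^ i) ^ 2 = 1 := by rw [← pow_mul, pow_mul', neg_one_sq, one_pow]
    rw [zsmul_eq_mul, nsmul_eq_mul, mul_one, Nat.add_sub_cancel_left, div_pow]
    push_cast
    linear_combination
      -((-1) ^ j * ((j + i).choose j : ℂ) * (x + j) ^ N / 2 ^ (j + i)) * hsq
  rw [eulerPoly, sum_congr rfl fun k _ ↦ hterm k]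
  refine sum_subset (range_subset_range.mpr (by omega)) fun k hkM hkN ↦ ?_
  rw [fwdDiff_iter_pow_eq_zero_of_lt (by simp at hkM hkN; omega), Pi.zero_apply, mul_zero]

theorem isAppell_eulerPoly : IsAppell eulerPoly :=
  IsAppell.of_forall_le_eq
    (fun M ↦ IsAppell.sum (range (M + 1)) _ fun k ↦ isAppell_fwdDiff_iter_pow 1 k)
    fun _ _ hNM ↦ funext (eulerPoly_eq_sum_fwdDiff_iter hNM)

theorem eulerPoly_add_eulerPoly_add_one (N : ℕ) (x : ℂ) :
    eulerPoly N x + eulerPoly N (x + 1) = 2 * x ^ N := by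
  set D : ℕ → ℂ → ℂ := fun k ↦ (Δ_[1])^[k] (fun t : ℂ ↦ t ^ N) with hD
  have hstep : ∀ k, D k (x + 1) = D k x + D (k + 1) x := by
    intro k
    simp only [hD, iterate_succ_apply', fwdDiff]
    ring
  rw [eulerPoly_eq_sum_fwdDiff_iter le_rfl, eulerPoly_eq_sum_fwdDiff_iter le_rfl,
    ← sum_add_distrib]
  have htel : ∀ k, (-1 / 2 : ℂ) ^ k * D k x + (-1 / 2) ^ k * D k (x + 1)
      = 2 * (-1 / 2) ^ k * D k x - 2 * (-1 / 2) ^ (k + 1) * D (k + 1) x := by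
    intro k
    rw [hstep]
    ring
  rw [sum_congr rfl fun k _ ↦ htel k, sum_range_sub' (fun k ↦ 2 * (-1 / 2 : ℂ) ^ k * D k x)]
  simp [hD, fwdDiff_iter_pow_eq_zero_of_lt (Nat.lt_succ_self N)]

theorem sum_two_pow_mul_choose_mul_eulerPoly (n : ℕ) (z : ℂ) :
    ∑ k ∈ range (n + 1), (2 : ℂ) ^ (2 * k) * ((2 * n).choose (2 * k) : ℂ) *
        eulerPoly (2 * k) z = (2 * z - 1) ^ (2 * n) := by
  have h := isAppell_eulerPoly.pow_mul_add_add_neg_one_pow_mul_sub (c := 2) (y := 1 / 2)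
    (by norm_num) (2 * n) z
  rw [sum_range_mul_one_add_neg_one_pow, Even.neg_one_pow ⟨n, two_mul n⟩, one_mul,
    show z + 1 / 2 = z - 1 / 2 + 1 by ring, add_comm, eulerPoly_add_eulerPoly_add_one] at h
  have hpow : (2 * z - 1) ^ (2 * n) = 2 ^ (2 * n) * (z - 1 / 2) ^ (2 * n) := by
    rw [← mul_pow]; ring
  linear_combination (-1 / 2 : ℂ) * h - hpow

theorem stmt7 (n : ℕ) (z : ℂ) :
    ∑ k ∈ range (n + 1), (2 : ℂ) ^ (2 * k) * ((2 * n + 1).choose (2 * k) : ℂ) *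
        bernoulliPoly (2 * k) z
      = ∑ k ∈ range (n + 1), (2 * (k : ℂ) + 1) * 2 ^ (2 * k) *
        ((2 * n + 1).choose (2 * k + 1) : ℂ) * eulerPoly (2 * k) z := by
  rw [sum_two_pow_mul_choose_mul_bernoulliPoly, ← sum_two_pow_mul_choose_mul_eulerPoly,
    mul_sum]
  refine sum_congr rfl fun k _ ↦ ?_
  have hchoose : ((2 * n + 1 : ℕ) : ℂ) * ((2 * n).choose (2 * k) : ℂ)
      = ((2 * n + 1).choose (2 * k + 1) : ℂ) * ((2 * k + 1 : ℕ) : ℂ) := by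
    exact_mod_cast Nat.add_one_mul_choose_eq (2 * n) (2 * k)
  push_cast at hchoose
  linear_combination (2 : ℂ) ^ (2 * k) * eulerPoly (2 * k) z * hchoose
end

section
/- For every nonnegative integer n and every complex number z, ∑_{k=0}^{n} C(2n,2k) · B_{2k}(3z) − ∑_{k=0}^{n-1} C(2n,2k+1) · B_{2k+1}(3z) = 2·∑_{k=0}^{n-1} 3^{2k-1} · C(2n,2k) · B_{2k}(z) + 3^{2n} · B_{2n}(z), where C(n,k) denotes the binomial coefficient. -/
open Finset

/-!
The addition formula `B_m(x + y) = ∑ₖ C(m,k) B_k(x) y^(m-k)` turns the left side into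
`B_{2n}(3z - 1)`. Raabe's multiplication formula with `q = 3`, taken at `z - 1/3`, gives
`3 B_{2n}(3z - 1) = 3^{2n} (B_{2n}(z - 1/3) + B_{2n}(z) + B_{2n}(z + 1/3))`, and in
`B_{2n}(z + 1/3) + B_{2n}(z - 1/3)` the addition formula cancels all odd-index terms.

The multiplication formula holds because its defect `q B_m(qx) - q^m ∑_{j<q} B_m(x + j/q)` has
period `1/q` (by `B_m(1 + x) = B_m(x) + m x^(m-1)`), so it is constant, while its derivative is
`q m` times the defect of index `m - 1`.
-/

theorem Finset.sum_range_two_mul_add_one {M : Type*} [AddCommMonoid M] (f : ℕ → M) (n : ℕ) :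
    ∑ j ∈ range (2 * n + 1), f j =
      ∑ k ∈ range (n + 1), f (2 * k) + ∑ k ∈ range n, f (2 * k + 1) := by
  induction n with
  | zero => simp
  | succ n ih =>
    rw [show 2 * (n + 1) + 1 = 2 * n + 1 + 1 + 1 by ring, sum_range_succ, sum_range_succ, ih,
      sum_range_succ (fun k => f (2 * k)) (n + 1), sum_range_succ (fun k => f (2 * k + 1)) n]
    abel

theorem Finset.sum_range_two_mul_add_one_neg_one_pow {R : Type*} [CommRing R] (f : ℕ → R)
    (n : ℕ) :
    ∑ j ∈ range (2 * n + 1), (-1) ^ j * f j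
      = ∑ k ∈ range (n + 1), f (2 * k) - ∑ k ∈ range n, f (2 * k + 1) := by
  simp [sum_range_two_mul_add_one, pow_succ, pow_mul, sub_eq_add_neg]

theorem neg_one_pow_two_mul_sub {R : Type*} [Ring R] {n j : ℕ} (hj : j ≤ 2 * n) :
    (-1 : R) ^ (2 * n - j) = (-1) ^ j := by
  rw [neg_one_pow_eq_pow_mod_two, neg_one_pow_eq_pow_mod_two (n := j)]
  congr 1
  omega

namespace Polynomial

variable {A : Type*} [CommRing A] [Algebra ℚ A]

theorem aeval_bernoulli (n : ℕ) (x : A) :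
    aeval x (bernoulli n) =
      ∑ i ∈ range (n + 1),
        algebraMap ℚ A (_root_.bernoulli i) * n.choose i * x ^ (n - i) := by
  simp [bernoulli, aeval_monomial, mul_comm]

theorem aeval_bernoulli_add (n : ℕ) (x y : A) :
    aeval (x + y) (bernoulli n) =
      ∑ k ∈ range (n + 1), n.choose k * aeval x (bernoulli k) * y ^ (n - k) := by
  simp_rw [aeval_bernoulli, mul_sum, sum_mul, range_eq_Ico]
  rw [← sum_Ico_Ico_comm]
  refine sum_congr rfl fun i hi => ?_
  have hin : i ≤ n := Nat.lt_succ_iff.mp (mem_Ico.mp hi).2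
  rw [sum_Ico_eq_sum_range, add_pow, mul_sum, Nat.sub_add_comm hin]
  refine sum_congr rfl fun j _ => ?_
  have hchoose : (n.choose i : A) * (n - i).choose j = n.choose (i + j) * (i + j).choose i := by
    rw [← Nat.cast_mul, ← Nat.cast_mul, Nat.choose_mul (Nat.le_add_right i j),
      Nat.add_sub_cancel_left]
  rw [Nat.add_sub_cancel_left, Nat.sub_sub]
  linear_combination (algebraMap ℚ A (_root_.bernoulli i) * x ^ j * y ^ (n - (i + j))) * hchoose

theorem aeval_sub_one_bernoulli_two_mul (n : ℕ) (x : A) :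
    aeval (x - 1) (bernoulli (2 * n)) =
      ∑ k ∈ range (n + 1), ((2 * n).choose (2 * k) : A) * aeval x (bernoulli (2 * k))
        - ∑ k ∈ range n,
          ((2 * n).choose (2 * k + 1) : A) * aeval x (bernoulli (2 * k + 1)) := by
  rw [sub_eq_add_neg, aeval_bernoulli_add,
    ← sum_range_two_mul_add_one_neg_one_pow
      fun j => ((2 * n).choose j : A) * aeval x (bernoulli j)]
  refine sum_congr rfl fun j hj => ?_
  rw [neg_one_pow_two_mul_sub (Nat.lt_succ_iff.mp (mem_range.mp hj)), mul_comm]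

theorem aeval_add_bernoulli_two_mul_add_aeval_sub (n : ℕ) (x y : A) :
    aeval (x + y) (bernoulli (2 * n)) + aeval (x - y) (bernoulli (2 * n)) =
      2 * ∑ k ∈ range (n + 1),
        ((2 * n).choose (2 * k) : A) * aeval x (bernoulli (2 * k)) * y ^ (2 * n - 2 * k) := by
  have hsub : aeval (x - y) (bernoulli (2 * n)) = ∑ j ∈ range (2 * n + 1),
      (-1) ^ j * (((2 * n).choose j : A) * aeval x (bernoulli j) * y ^ (2 * n - j)) := by
    rw [sub_eq_add_neg, aeval_bernoulli_add]
    refine sum_congr rfl fun j hj => ?_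
    rw [neg_pow, neg_one_pow_two_mul_sub (Nat.lt_succ_iff.mp (mem_range.mp hj))]
    ring
  rw [hsub, aeval_bernoulli_add, sum_range_two_mul_add_one, sum_range_two_mul_add_one_neg_one_pow]
  ring

theorem eq_C_eval_zero_of_periodic {R : Type*} [CommRing R] [IsDomain R] [CharZero R]
    {p : R[X]} {c : R} (hc : c ≠ 0) (h : Function.Periodic p.eval c) : p = C (p.eval 0) := by
  refine eq_of_infinite_eval_eq _ _ (Set.infinite_of_injective_forall_mem
    (f := fun k : ℕ => (k : R) * c) (fun a b hab => ?_) fun k => ?_)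
  · simpa [hc] using hab
  · simpa using h.nat_mul_eq k

noncomputable def bernoulliMulDefect (q m : ℕ) : ℚ[X] :=
  C (q : ℚ) * (bernoulli m).comp (C (q : ℚ) * X) -
    C ((q : ℚ) ^ m) * ∑ j ∈ range q, (bernoulli m).comp (X + C ((j : ℚ) / q))

theorem bernoulliMulDefect_periodic {q : ℕ} (hq : q ≠ 0) (m : ℕ) :
    Function.Periodic (bernoulliMulDefect q m).eval (1 / q) := by
  intro x
  have hq' : (q : ℚ) ≠ 0 := Nat.cast_ne_zero.mpr hq
  have hshift : ∑ j ∈ range q, (bernoulli m).eval (x + 1 / q + j / q) =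
      ∑ j ∈ range q, (bernoulli m).eval (x + j / q) + m * x ^ (m - 1) := by
    have htel := (sum_range_succ' (fun j : ℕ => (bernoulli m).eval (x + j / q)) q).symm
    rw [sum_range_succ] at htel
    simp only [Nat.cast_add, Nat.cast_one, Nat.cast_zero, zero_div, add_zero,
      div_self hq', add_comm x 1, bernoulli_eval_one_add] at htel
    have hx (j : ℕ) : x + 1 / q + j / q = x + (j + 1) / q := by ring
    simp only [hx]
    linear_combination htel
  simp only [bernoulliMulDefect, eval_sub, eval_mul, eval_C, eval_comp, eval_add, eval_X,
    eval_finsetSum]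
  rw [hshift, show q * (x + 1 / q) = 1 + q * x by field_simp; ring, bernoulli_eval_one_add]
  cases m with
  | zero => simp
  | succ m => simp only [Nat.add_sub_cancel]; ring

theorem derivative_bernoulliMulDefect (q m : ℕ) :
    derivative (bernoulliMulDefect q (m + 1)) =
      C ((q : ℚ) * (m + 1)) * bernoulliMulDefect q m := by
  simp only [bernoulliMulDefect, derivative_sub, derivative_C_mul, derivative_sum, derivative_comp,
    derivative_add, derivative_X, derivative_C, derivative_bernoulli_add_one,
    mul_comp, add_comp, natCast_comp, one_comp, add_zero, one_mul, ← mul_sum]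
  simp only [map_mul, map_pow, map_add, map_natCast, map_one]
  ring

theorem bernoulliMulDefect_eq_zero {q : ℕ} (hq : q ≠ 0) (m : ℕ) :
    bernoulliMulDefect q m = 0 := by
  have hderiv := derivative_bernoulliMulDefect q m
  rw [eq_C_eval_zero_of_periodic (by positivity) (bernoulliMulDefect_periodic hq (m + 1)),
    derivative_C, eq_comm, mul_eq_zero, C_eq_zero] at hderiv
  exact hderiv.resolve_left (by positivity)

theorem aeval_mul_bernoulli {q : ℕ} (hq : q ≠ 0) (m : ℕ) (x : A) :
    q * aeval (q * x) (bernoulli m) =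
      q ^ m * ∑ j ∈ range q, aeval (x + algebraMap ℚ A (j / q)) (bernoulli m) := by
  have h := congr(aeval x $(bernoulliMulDefect_eq_zero hq m))
  simpa [bernoulliMulDefect, aeval_comp, sub_eq_zero] using h

theorem aeval_three_mul_sub_one_bernoulli {K : Type*} [Field K] [CharZero K] (m : ℕ) (z : K) :
    3 * aeval (3 * z - 1) (bernoulli m) = 3 ^ m * (aeval (z - 1 / 3) (bernoulli m) +
      aeval z (bernoulli m) + aeval (z + 1 / 3) (bernoulli m)) := by
  have h := aeval_mul_bernoulli three_ne_zero m (z - 1 / 3)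
  simp only [sum_range_succ, sum_range_zero, zero_add, map_div₀, map_natCast, map_ofNat,
    Nat.cast_ofNat, Nat.cast_zero, Nat.cast_one] at h
  rwa [show 3 * (z - 1 / 3) = 3 * z - 1 by ring, show z - 1 / 3 + 0 / 3 = z - 1 / 3 by ring,
    show z - 1 / 3 + 1 / 3 = z by ring, show z - 1 / 3 + 2 / 3 = z + 1 / 3 by ring] at h

end Polynomial

theorem stmt10 (n : ℕ) (z : ℂ) :
    ∑ k ∈ range (n + 1), ((2 * n).choose (2 * k) : ℂ) * bernoulliPoly (2 * k) (3 * z)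
      - ∑ k ∈ range n, ((2 * n).choose (2 * k + 1) : ℂ) * bernoulliPoly (2 * k + 1) (3 * z)
      = 2 * ∑ k ∈ range n, (3 : ℂ) ^ (2 * (k : ℤ) - 1) *
          ((2 * n).choose (2 * k) : ℂ) * bernoulliPoly (2 * k) z
        + 3 ^ (2 * n) * bernoulliPoly (2 * n) z := by
  simp only [bernoulliPoly]
  rw [← Polynomial.aeval_sub_one_bernoulli_two_mul]
  have hmul := Polynomial.aeval_three_mul_sub_one_bernoulli (2 * n) z
  have hsym := Polynomial.aeval_add_bernoulli_two_mul_add_aeval_sub n z (1 / 3)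
  rw [sum_range_succ, Nat.choose_self, Nat.sub_self, pow_zero, Nat.cast_one, one_mul, mul_one]
    at hsym
  have hsum : (3 : ℂ) ^ (2 * n) * ∑ k ∈ range n, ((2 * n).choose (2 * k) : ℂ) *
        Polynomial.aeval z (Polynomial.bernoulli (2 * k)) * (1 / 3) ^ (2 * n - 2 * k) =
      3 * ∑ k ∈ range n, 3 ^ (2 * (k : ℤ) - 1) * ((2 * n).choose (2 * k) : ℂ) *
        Polynomial.aeval z (Polynomial.bernoulli (2 * k)) := by
    rw [mul_sum, mul_sum]
    refine sum_congr rfl fun k hk => ?_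
    have hpow : (3 : ℂ) ^ (2 * n) * (1 / 3) ^ (2 * n - 2 * k) = 3 * 3 ^ (2 * (k : ℤ) - 1) := by
      rw [one_div, inv_pow, ← div_eq_mul_inv, ← zpow_natCast, ← zpow_natCast,
        ← zpow_sub₀ three_ne_zero, ← zpow_one_add₀ three_ne_zero]
      push_cast [Nat.cast_sub (by grind : 2 * k ≤ 2 * n)]
      ring_nf
    linear_combination
      ((2 * n).choose (2 * k) : ℂ) * Polynomial.aeval z (Polynomial.bernoulli (2 * k)) * hpow
  linear_combination (hmul + 3 ^ (2 * n) * hsym + 2 * hsum) / 3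
end

section
/- For every nonnegative integer n and every complex number z, ∑_{k=0}^{n} C(2n+1,2k+1) · B_{2k+1}(3z) − ∑_{k=0}^{n} C(2n+1,2k) · B_{2k}(3z) = 2·∑_{k=0}^{n-1} 3^{2k} · C(2n+1,2k+1) · B_{2k+1}(z) + 3^{2n+1} · B_{2n+1}(z), where C(n,k) denotes the binomial coefficient. -/
/-!
Write `m = 2n + 1`. The Hasse derivatives of `B_m` are `C(m,k) B_{m-k}`, so Taylor expansion gives
the addition formula `B_m(x + y) = ∑ C(m,j) B_j(x) y^{m-j}`. With `y = -1` it turns the left-hand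
side into `B_m(3z - 1)`; with `y = ±1/3` it shows that `3^m (B_m(z + 1/3) + B_m(z - 1/3))` is twice
the odd-index part of `∑ C(m,j) 3^j B_j(z)`. The multiplication theorem
`3 B_m(3x) = 3^m (B_m(x) + B_m(x + 1/3) + B_m(x + 2/3))` at `x = z - 1/3` connects the two.
-/

open Finset

namespace Polynomial

theorem natDegree_bernoulli_le (m : ℕ) : (bernoulli m).natDegree ≤ m :=
  natDegree_le_iff_coeff_eq_zero.2 fun i hi => by
    rw [coeff_bernoulli, if_neg (by exact_mod_cast hi.not_ge)]

theorem hasseDeriv_bernoulli (k m : ℕ) :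
    hasseDeriv k (bernoulli m) = m.choose k • bernoulli (m - k) := by
  ext i
  rw [hasseDeriv_coeff, coeff_smul, coeff_bernoulli, coeff_bernoulli, nsmul_eq_mul]
  by_cases h : i + k ≤ m
  · rw [if_pos h, if_pos (by omega), show m - (i + k) = m - k - i by omega]
    have hc : ((i + k).choose k * m.choose (i + k) : ℚ) = m.choose k * (m - k).choose i := by
      have := Nat.choose_mul (n := m) (Nat.le_add_left k i)
      rw [Nat.add_sub_cancel] at this
      exact_mod_cast (Nat.mul_comm _ _).trans this
    linear_combination _root_.bernoulli (m - k - i) * hc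
  · rw [if_neg h, mul_zero]
    split_ifs with h'
    · rw [Nat.choose_eq_zero_of_lt (by omega), Nat.cast_zero, zero_mul]
    · rw [mul_zero]

theorem aeval_add_bernoulli {A : Type*} [CommRing A] [Algebra ℚ A] (m : ℕ) (x y : A) :
    aeval (x + y) (bernoulli m) =
      ∑ j ∈ range (m + 1), (m.choose j : A) * aeval x (bernoulli j) * y ^ (m - j) := by
  have hdeg : (taylor x ((bernoulli m).map (algebraMap ℚ A))).natDegree < m + 1 := by
    rw [natDegree_taylor]
    exact Nat.lt_succ_of_le ((natDegree_map_le).trans (natDegree_bernoulli_le m))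
  rw [aeval_def, eval₂_eq_eval_map, add_comm, ← taylor_eval, eval_eq_sum_range' hdeg,
    ← sum_range_reflect]
  refine sum_congr rfl fun j hj => ?_
  rw [mem_range] at hj
  have hmap : hasseDeriv (m - j) ((bernoulli m).map (algebraMap ℚ A)) =
      (hasseDeriv (m - j) (bernoulli m)).map (algebraMap ℚ A) := by
    ext; simp [hasseDeriv_coeff]
  rw [taylor_coeff, Nat.add_sub_cancel, hmap, eval_map_algebraMap, hasseDeriv_bernoulli,
    Nat.sub_sub_self (by omega), Nat.choose_symm (by omega), map_nsmul, nsmul_eq_mul]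

theorem eq_C_of_eval_add_eq {R : Type*} [CommRing R] [IsDomain R] [CharZero R] {p : R[X]}
    {a : R} (ha : a ≠ 0) (h : ∀ x, p.eval (x + a) = p.eval x) : p = C (p.eval 0) := by
  have hmul : ∀ k : ℕ, p.eval (k * a) = p.eval 0 := by
    intro k
    induction k with
    | zero => simp
    | succ k ih => rw [Nat.cast_succ, add_one_mul, h, ih]
  refine eq_of_infinite_eval_eq _ _ (Set.infinite_of_injective_forall_mem
    ((mul_left_injective₀ ha).comp Nat.cast_injective) fun k => ?_)
  simp [hmul]

theorem sum_bernoulli_eval_add_one_div (m : ℕ) {q : ℕ} (hq : q ≠ 0) (x : ℚ) :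
    ∑ j ∈ range q, (bernoulli m).eval (x + 1 / q + j / q) =
      ∑ j ∈ range q, (bernoulli m).eval (x + j / q) + m * x ^ (m - 1) := by
  have hshift : ∀ j : ℕ, x + 1 / q + j / q = x + ((j + 1 : ℕ) : ℚ) / q := by
    intro j; push_cast; ring
  simp_rw [hshift]
  have := sum_range_succ' (fun j => (bernoulli m).eval (x + (j : ℚ) / q)) q
  rw [sum_range_succ, Nat.cast_zero, zero_div, add_zero, div_self (by exact_mod_cast hq),
    add_comm x 1, bernoulli_eval_one_add] at this
  linear_combination -this

theorem derivative_bernoulli_succ_comp (m : ℕ) (p : ℚ[X]) :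
    derivative ((bernoulli (m + 1)).comp p) =
      (m + 1 : ℚ) • (derivative p * (bernoulli m).comp p) := by
  rw [derivative_comp, derivative_bernoulli_add_one, mul_comp, smul_eq_C_mul]
  simp only [add_comp, natCast_comp, one_comp, map_add, map_natCast, map_one]
  ring

theorem smul_bernoulli_comp_C_mul_X (m : ℕ) {q : ℕ} (hq : q ≠ 0) :
    (q : ℚ) • (bernoulli m).comp (C (q : ℚ) * X) =
      (q : ℚ) ^ m • ∑ j ∈ range q, (bernoulli m).comp (X + C ((j : ℚ) / q)) := by
  set D : ℕ → ℚ[X] := fun k => (q : ℚ) • (bernoulli k).comp (C (q : ℚ) * X) -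
      (q : ℚ) ^ k • ∑ j ∈ range q, (bernoulli k).comp (X + C ((j : ℚ) / q)) with hD
  have hq' : (q : ℚ) ≠ 0 := by exact_mod_cast hq
  have hper : ∀ x : ℚ, (D (m + 1)).eval (x + 1 / q) = (D (m + 1)).eval x := by
    intro x
    simp only [hD, eval_sub, eval_smul, eval_comp, eval_mul, eval_C, eval_X, eval_add,
      eval_finsetSum, smul_eq_mul]
    rw [sum_bernoulli_eval_add_one_div _ hq, mul_add, mul_one_div_cancel hq', add_comm _ 1,
      bernoulli_eval_one_add]
    push_cast
    ring
  -- `D (m + 1)` is `1/q`-periodic, hence constant; its derivative is a nonzero multiple of `D m`.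
  have hderiv : derivative (D (m + 1)) = ((q : ℚ) * (m + 1)) • D m := by
    simp only [hD, derivative_sub, derivative_smul, derivative_sum, derivative_bernoulli_succ_comp,
      derivative_X, derivative_X_add_C, one_mul, smul_mul_assoc, ← smul_eq_C_mul, ← smul_sum]
    module
  have hconst := eq_C_of_eval_add_eq (one_div_ne_zero hq') hper
  have hDm : ((q : ℚ) * (m + 1)) • D m = 0 := by
    rw [← hderiv, hconst, derivative_C]
  exact sub_eq_zero.1 ((smul_eq_zero_iff_right (by positivity)).1 hDm)

end Polynomial

theorem sum_range_two_mul {M : Type*} [AddCommMonoid M] (N : ℕ) (f : ℕ → M) :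
    ∑ j ∈ range (2 * N), f j = ∑ k ∈ range N, f (2 * k) + ∑ k ∈ range N, f (2 * k + 1) := by
  induction N with
  | zero => simp
  | succ N ih =>
    rw [show 2 * (N + 1) = 2 * N + 1 + 1 by ring, sum_range_succ, sum_range_succ, ih,
      sum_range_succ, sum_range_succ]
    abel

theorem sum_range_mul_neg_one_pow {R : Type*} [CommRing R] (n : ℕ) (f : ℕ → R) :
    ∑ j ∈ range (2 * n + 1 + 1), f j * (-1) ^ (2 * n + 1 - j) =
      ∑ k ∈ range (n + 1), f (2 * k + 1) - ∑ k ∈ range (n + 1), f (2 * k) := by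
  have hodd : ∀ k ∈ range (n + 1), f (2 * k) * (-1) ^ (2 * n + 1 - 2 * k) = -f (2 * k) := by
    intro k hk
    rw [Odd.neg_one_pow ⟨n - k, by grind⟩, mul_neg_one]
  have heven : ∀ k ∈ range (n + 1),
      f (2 * k + 1) * (-1) ^ (2 * n + 1 - (2 * k + 1)) = f (2 * k + 1) := by
    intro k hk
    rw [Even.neg_one_pow ⟨n - k, by grind⟩, mul_one]
  rw [show 2 * n + 1 + 1 = 2 * (n + 1) by ring, sum_range_two_mul, sum_congr rfl hodd,
    sum_congr rfl heven, sum_neg_distrib, neg_add_eq_sub]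

theorem bernoulliPoly_add (m : ℕ) (x y : ℂ) :
    bernoulliPoly m (x + y) =
      ∑ j ∈ range (m + 1), (m.choose j : ℂ) * bernoulliPoly j x * y ^ (m - j) :=
  Polynomial.aeval_add_bernoulli m x y

theorem three_pow_mul_bernoulliPoly_add_div_three (m : ℕ) (z ε : ℂ) :
    3 ^ m * bernoulliPoly m (z + ε / 3) =
      ∑ j ∈ range (m + 1), (m.choose j : ℂ) * bernoulliPoly j z * 3 ^ j * ε ^ (m - j) := by
  rw [bernoulliPoly_add, mul_sum]
  refine sum_congr rfl fun j hj => ?_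
  rw [div_pow, pow_sub₀ _ three_ne_zero (by grind)]
  field_simp

theorem bernoulliPoly_sub_one (n : ℕ) (x : ℂ) :
    bernoulliPoly (2 * n + 1) (x - 1) =
      ∑ k ∈ range (n + 1), ((2 * n + 1).choose (2 * k + 1) : ℂ) * bernoulliPoly (2 * k + 1) x
      - ∑ k ∈ range (n + 1), ((2 * n + 1).choose (2 * k) : ℂ) * bernoulliPoly (2 * k) x := by
  rw [sub_eq_add_neg x, bernoulliPoly_add]
  exact sum_range_mul_neg_one_pow n fun j => ((2 * n + 1).choose j : ℂ) * bernoulliPoly j x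

theorem three_pow_mul_bernoulliPoly_add_add_sub (n : ℕ) (z : ℂ) :
    3 ^ (2 * n + 1) * (bernoulliPoly (2 * n + 1) (z + 1 / 3) +
      bernoulliPoly (2 * n + 1) (z - 1 / 3)) = 2 * ∑ k ∈ range (n + 1),
        ((2 * n + 1).choose (2 * k + 1) : ℂ) * bernoulliPoly (2 * k + 1) z * 3 ^ (2 * k + 1) := by
  have hplus := three_pow_mul_bernoulliPoly_add_div_three (2 * n + 1) z 1
  have hminus := three_pow_mul_bernoulliPoly_add_div_three (2 * n + 1) z (-1)
  simp only [one_pow, mul_one] at hplus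
  rw [neg_div, ← sub_eq_add_neg] at hminus
  rw [mul_add, hplus, hminus, sum_range_mul_neg_one_pow, show 2 * n + 1 + 1 = 2 * (n + 1) by ring,
    sum_range_two_mul]
  ring

theorem three_mul_bernoulliPoly_three_mul_sub_one (m : ℕ) (z : ℂ) :
    3 * bernoulliPoly m (3 * z - 1) = 3 ^ m *
      (bernoulliPoly m (z - 1 / 3) + bernoulliPoly m z + bernoulliPoly m (z + 1 / 3)) := by
  have h := congrArg (Polynomial.aeval (z - 1 / 3))
    (Polynomial.smul_bernoulli_comp_C_mul_X m (q := 3) three_ne_zero)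
  norm_num [Polynomial.aeval_comp, sum_range_succ, Rat.smul_def] at h
  rw [show 3 * (z - 1 / 3) = 3 * z - 1 by ring, show z - 1 / 3 + 2 / 3 = z + 1 / 3 by ring] at h
  simp only [bernoulliPoly]
  linear_combination h

theorem stmt11 (n : ℕ) (z : ℂ) :
    ∑ k ∈ range (n + 1), ((2 * n + 1).choose (2 * k + 1) : ℂ) *
        bernoulliPoly (2 * k + 1) (3 * z)
      - ∑ k ∈ range (n + 1), ((2 * n + 1).choose (2 * k) : ℂ) *
        bernoulliPoly (2 * k) (3 * z)
      = 2 * ∑ k ∈ range n, (3 : ℂ) ^ (2 * k) *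
          ((2 * n + 1).choose (2 * k + 1) : ℂ) * bernoulliPoly (2 * k + 1) z
        + 3 ^ (2 * n + 1) * bernoulliPoly (2 * n + 1) z := by
  have hshift := bernoulliPoly_sub_one n (3 * z)
  have hsym := three_pow_mul_bernoulliPoly_add_add_sub n z
  have hmul := three_mul_bernoulliPoly_three_mul_sub_one (2 * n + 1) z
  have htop : ∑ k ∈ range (n + 1),
        ((2 * n + 1).choose (2 * k + 1) : ℂ) * bernoulliPoly (2 * k + 1) z * 3 ^ (2 * k + 1) =
      3 * ∑ k ∈ range n, (3 : ℂ) ^ (2 * k) *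
          ((2 * n + 1).choose (2 * k + 1) : ℂ) * bernoulliPoly (2 * k + 1) z
        + 3 ^ (2 * n + 1) * bernoulliPoly (2 * n + 1) z := by
    rw [sum_range_succ, Nat.choose_self, Nat.cast_one, one_mul, mul_sum]
    exact congrArg₂ (· + ·) (sum_congr rfl fun k _ => by ring) (mul_comm _ _)
  linear_combination -hshift + hmul / 3 + hsym / 3 + 2 * htop / 3
end
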